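/- Let G = (V,E) be a directed mixed graph, O ⊆ V, and M = m(G,O) the latent projection of G on O. Then for all A, B, C ⊆ O: B is μ-separated from A given C in G if and only if B is μ-separated from A given C in M. -/

import Mathlib

/-!
Directed mixed graphs (DMGs) with μ-separation, following
Mogensen & Hansen, "Markov equivalence of marginalized local independence graphs".
-/

universe u

/-- A directed mixed graph on node set `V`: a set of directed edges (`dir a b`
meaning `a → b`) and a set of bidirected edges (`bi`, a symmetric relation since
bidirected edges are unordered pairs).  Loops are allowed. -/
structure DMG (V : Type u) where
  dir : V → V → Prop
  bi : V → V → Prop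
  bi_symm : ∀ a b, bi a b → bi b a

namespace DMG

variable {V : Type u}

/-- A single step of a walk: an edge instance together with the direction in
which it is traversed (this records, in particular, orientations of loops).
A directed edge has a tail at its source and a head at its target; a bidirected
edge has heads at both endpoints. -/
inductive Step (G : DMG V) : V → V → Type u
  | dirF : ∀ {a b : V}, G.dir a b → Step G a b
  | dirB : ∀ {a b : V}, G.dir b a → Step G a b
  | bid  : ∀ {a b : V}, G.bi a b → Step G a b

/-- Whether the step has a head (edge mark) at its start node. -/
def Step.headStart {G : DMG V} : ∀ {a b : V}, Step G a b → Bool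
  | _, _, .dirF _ => false
  | _, _, .dirB _ => true
  | _, _, .bid _ => true

/-- Whether the step has a head (edge mark) at its end node. -/
def Step.headEnd {G : DMG V} : ∀ {a b : V}, Step G a b → Bool
  | _, _, .dirF _ => true
  | _, _, .dirB _ => false
  | _, _, .bid _ => true

/-- The step traverses a bidirected edge. -/
def Step.IsBid {G : DMG V} {a b : V} : Step G a b → Prop
  | .bid _ => True
  | _ => False

/-- The step traverses a directed edge, forwards. -/
def Step.IsDirF {G : DMG V} {a b : V} : Step G a b → Prop
  | .dirF _ => True
  | _ => False

/-- The underlying edge of a step: a directed edge is the ordered pair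
(tail, head); a bidirected edge is the unordered pair of its endpoints. -/
def Step.edge {G : DMG V} : ∀ {a b : V}, Step G a b → (V × V) ⊕ (Sym2 V)
  | a, b, .dirF _ => Sum.inl (a, b)
  | a, b, .dirB _ => Sum.inl (b, a)
  | a, b, .bid _ => Sum.inr s(a, b)

/-- A walk in a DMG: an alternating sequence of nodes and edges, each edge
between its neighbouring nodes, with a chosen orientation of each edge
(in particular of each directed loop). -/
inductive Walk (G : DMG V) : V → V → Type u
  | nil (a : V) : Walk G a a
  | cons {a b c : V} (s : Step G a b) (w : Walk G b c) : Walk G a c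

namespace Walk

variable {G : DMG V}

/-- A nontrivial walk contains at least one edge. -/
def Nontrivial : ∀ {a b : V}, Walk G a b → Prop
  | _, _, .nil _ => False
  | _, _, .cons _ _ => True

/-- The list of nodes of a walk, in order (with multiplicity). -/
def nodes : ∀ {a b : V}, Walk G a b → List V
  | a, _, .nil _ => [a]
  | a, _, .cons _ w => a :: w.nodes

/-- The non-endpoint (internal) nodes of a walk, in order (with multiplicity). -/
def interior {a b : V} (w : Walk G a b) : List V :=
  (w.nodes.dropLast).drop 1

/-- The list of edges of a walk. -/
def edges : ∀ {a b : V}, Walk G a b → List ((V × V) ⊕ (Sym2 V))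
  | _, _, .nil _ => []
  | _, _, .cons s w => s.edge :: w.edges

/-- Whether the first edge of the walk has a head at the first node
(`false` for a trivial walk). -/
def firstHead : ∀ {a b : V}, Walk G a b → Bool
  | _, _, .nil _ => false
  | _, _, .cons s _ => s.headStart

/-- Whether the last edge of the walk has a head at the last node
(`false` for a trivial walk). -/
def lastHead : ∀ {a b : V}, Walk G a b → Bool
  | _, _, .nil _ => false
  | _, _, .cons s (.nil _) => s.headEnd
  | _, _, .cons _ (.cons t w) => lastHead (Walk.cons t w)

/-- Helper: conditions at all remaining internal node instances of a walk,
where `h` records whether the edge arriving at the current start node has a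
head there.  A node instance is a collider if both adjoining edges have a
head at it; a collider must lie in `Anc`, a noncollider must avoid `C`. -/
def openFrom (C Anc : Set V) : ∀ {a b : V}, Bool → Walk G a b → Prop
  | _, _, _, .nil _ => True
  | a, _, h, .cons s w =>
      (if h && s.headStart then a ∈ Anc else a ∉ C) ∧ openFrom C Anc s.headEnd w

/-- Helper: every remaining internal node instance which is a collider lies in `S`. -/
def collInFrom (S : Set V) : ∀ {a b : V}, Bool → Walk G a b → Prop
  | _, _, _, .nil _ => True
  | a, _, h, .cons s w =>
      ((h && s.headStart) = true → a ∈ S) ∧ collInFrom S s.headEnd w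

/-- Every collider (internal node instance with heads on both sides) of the
walk lies in `S`. -/
def CollidersIn (S : Set V) : ∀ {a b : V}, Walk G a b → Prop
  | _, _, .nil _ => True
  | _, _, .cons s w => collInFrom S s.headEnd w

/-- The walk has no colliders. -/
def NoColliders {a b : V} (w : Walk G a b) : Prop :=
  w.CollidersIn ∅

/-- Helper: every remaining internal node instance is a collider. -/
def allCollFrom : ∀ {a b : V}, Bool → Walk G a b → Prop
  | _, _, _, .nil _ => True
  | _, _, h, .cons s w => (h && s.headStart) = true ∧ allCollFrom s.headEnd w

/-- Every internal node instance of the walk is a collider (no noncolliders). -/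
def AllColliders : ∀ {a b : V}, Walk G a b → Prop
  | _, _, .nil _ => True
  | _, _, .cons s w => allCollFrom s.headEnd w

/-- Every edge of the walk is bidirected. -/
def AllBid : ∀ {a b : V}, Walk G a b → Prop
  | _, _, .nil _ => True
  | _, _, .cons s w => s.IsBid ∧ w.AllBid

/-- The walk consists of a directed first edge (pointing forwards) followed by
bidirected edges only (the form `α → β` or `α → γ₁ ↔ ⋯ ↔ γₙ ↔ β`). -/
def UniForm : ∀ {a b : V}, Walk G a b → Prop
  | _, _, .nil _ => False
  | _, _, .cons s w => s.IsDirF ∧ w.AllBid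

end Walk

/-- `a` is an ancestor of `b`: there is a (possibly trivial) directed path
from `a` to `b`. -/
def anc (G : DMG V) (a b : V) : Prop := Relation.ReflTransGen G.dir a b

/-- The set of ancestors of nodes of `C`. -/
def anSet (G : DMG V) (C : Set V) : Set V := {a | ∃ c ∈ C, G.anc a c}

/-- The walk is μ-connecting given `C`: it is nontrivial, its first node is not
in `C`, every collider lies in `An(C)`, no noncollider lies in `C`, and its
final edge has a head at the final node. -/
def Walk.MuConn {G : DMG V} (C : Set V) : ∀ {a b : V}, Walk G a b → Prop
  | _, _, .nil _ => False
  | a, _, .cons s w =>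
      a ∉ C ∧ Walk.openFrom C (G.anSet C) s.headEnd w ∧ (Walk.cons s w).lastHead = true

/-- `B` is μ-separated from `A` given `C` in `G`: there is no μ-connecting
walk from any node of `A` to any node of `B` given `C`. -/
def muSep (G : DMG V) (A B C : Set V) : Prop :=
  ∀ ⦃a b : V⦄, a ∈ A → b ∈ B → ∀ w : Walk G a b, ¬ w.MuConn C

/-- Two DMGs on the same node set are Markov equivalent: they induce the same
independence model via μ-separation, i.e. `I(G₁) = I(G₂)`. -/
def MarkovEq (G₁ G₂ : DMG V) : Prop :=
  ∀ A B C : Set V, muSep G₁ A B C ↔ muSep G₂ A B C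

/-- `b` is separable from `a` in `I(G)`: there is `C ⊆ V ∖ {a}` with
`⟨{a},{b} | C⟩ ∈ I(G)`. -/
def separable (G : DMG V) (a b : V) : Prop :=
  ∃ C : Set V, a ∉ C ∧ muSep G {a} {b} C

/-- `a ∈ u(b, I(G))`: `b` is inseparable from `a` in `I(G)`. -/
def inU (G : DMG V) (a b : V) : Prop := ¬ G.separable a b

/-- `G₁` is a subgraph of `G₂` (same node set, edge-set inclusion). -/
def Sub (G₁ G₂ : DMG V) : Prop :=
  (∀ a b, G₁.dir a b → G₂.dir a b) ∧ (∀ a b, G₁.bi a b → G₂.bi a b)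

/-- The DMG obtained by adding the directed edge `a → b`. -/
def addDir (G : DMG V) (a b : V) : DMG V where
  dir x y := G.dir x y ∨ (x = a ∧ y = b)
  bi := G.bi
  bi_symm := G.bi_symm

/-- The DMG obtained by adding the bidirected edge `a ↔ b`. -/
def addBi (G : DMG V) (a b : V) : DMG V where
  dir := G.dir
  bi x y := G.bi x y ∨ (x = a ∧ y = b) ∨ (x = b ∧ y = a)
  bi_symm x y h := by
    rcases h with h | h | h
    · exact Or.inl (G.bi_symm _ _ h)
    · exact Or.inr (Or.inr ⟨h.2, h.1⟩)
    · exact Or.inr (Or.inl ⟨h.2, h.1⟩)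

/-- The DMG obtained by removing the directed edge `a → b`. -/
def removeDir (G : DMG V) (a b : V) : DMG V where
  dir x y := G.dir x y ∧ ¬(x = a ∧ y = b)
  bi := G.bi
  bi_symm := G.bi_symm

/-- The DMG obtained by removing the bidirected edge `a ↔ b`. -/
def removeBi (G : DMG V) (a b : V) : DMG V where
  dir := G.dir
  bi x y := G.bi x y ∧ ¬((x = a ∧ y = b) ∨ (x = b ∧ y = a))
  bi_symm x y h := ⟨G.bi_symm _ _ h.1, fun hc => h.2 (by tauto)⟩

/-- The complete DMG: all directed and all bidirected edges present. -/
def IsComplete (G : DMG V) : Prop :=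
  (∀ a b, G.dir a b) ∧ (∀ a b, G.bi a b)

/-- A DMG is maximal if it is complete, or adding any (absent) edge changes the
induced independence model. -/
def IsMaximal (G : DMG V) : Prop :=
  G.IsComplete ∨
    ∀ a b : V, (¬ G.dir a b → ¬ MarkovEq (G.addDir a b) G) ∧
      (¬ G.bi a b → ¬ MarkovEq (G.addBi a b) G)

end DMG
namespace DMG

variable {V : Type u}

/-- An inducing path from `a` to `b`: a nontrivial path or cycle from `a` to
`b` with a head at `b`, with no noncolliders, and on which every node is an
ancestor of `a` or of `b`. -/
def IsInducingPath (G : DMG V) {a b : V} (w : Walk G a b) : Prop :=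
  w.Nontrivial ∧
  (w.nodes.Nodup ∨ (a = b ∧ w.nodes.dropLast.Nodup)) ∧
  w.lastHead = true ∧
  w.AllColliders ∧
  ∀ x ∈ w.nodes, G.anc x a ∨ G.anc x b

/-- A bidirected inducing path: an inducing path all of whose edges are bidirected. -/
def IsBidirectedIP (G : DMG V) {a b : V} (w : Walk G a b) : Prop :=
  G.IsInducingPath w ∧ w.AllBid

/-- A directed inducing path: an inducing path of the form `α → β` or
`α → γ₁ ↔ ⋯ ↔ γₙ ↔ β` with every `γᵢ` an ancestor of `β`. -/
def IsDirectedIP (G : DMG V) {a b : V} (w : Walk G a b) : Prop :=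
  G.IsInducingPath w ∧ w.UniForm ∧ ∀ x ∈ w.interior, G.anc x b

/-- There exists a nontrivial walk in `G` between `x` and `y` with no
colliders, all non-endpoint nodes in `M`, and with edge marks `hs` at `x`
(`true` = head) and `he` at `y`. -/
def ConnThrough (G : DMG V) (M : Set V) (x y : V) (hs he : Bool) : Prop :=
  ∃ w : Walk G x y, w.Nontrivial ∧ w.NoColliders ∧
    (∀ z ∈ w.interior, z ∈ M) ∧ w.firstHead = hs ∧ w.lastHead = he

/-- The latent projection `m(G, O)` of `G` on `O`: the DMG on node set `O`
having an edge (with given endpoint marks) between `α` and `β` if and only if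
`G` contains a nontrivial endpoint-identical walk between `α` and `β` with no
colliders and all non-endpoint nodes in `M = V ∖ O`. -/
def latentProj (G : DMG V) (O : Set V) : DMG {x : V // x ∈ O} where
  dir x y := ConnThrough G Oᶜ x.1 y.1 false true
  bi x y := ConnThrough G Oᶜ x.1 y.1 true true ∨ ConnThrough G Oᶜ y.1 x.1 true true
  bi_symm x y h := h.symm

/-- `x` is directedly collider-connected to `b`: there is a nontrivial walk
from `x` to `b` with a head at `b` on which every non-endpoint node is a
collider. -/
def dirCollConn (G : DMG V) (x b : V) : Prop :=
  ∃ w : Walk G x b, w.Nontrivial ∧ w.AllColliders ∧ w.lastHead = true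

/-- The set `D(a,b)` of nodes in `An({a,b})` directedly collider-connected to
`b`, except `a`. -/
def Dset (G : DMG V) (a b : V) : Set V :=
  {x | x ∈ G.anSet {a, b} ∧ G.dirCollConn x b} \ {a}

/-- `a` and `b` are potential siblings in the independence model `I(G)`. -/
def PotSib (G : DMG V) (a b : V) : Prop :=
  (G.inU b a ∧ G.inU a b) ∧
  (∀ (γ : V) (C : Set V), b ∈ C → muSep G {γ} {a} C → muSep G {γ} {b} C) ∧
  (∀ (γ : V) (C : Set V), a ∈ C → muSep G {γ} {b} C → muSep G {γ} {a} C)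

/-- `a` is a potential parent of `b` in the independence model `I(G)`. -/
def PotPar (G : DMG V) (a b : V) : Prop :=
  G.inU a b ∧
  (∀ (γ : V) (C : Set V), a ∉ C → muSep G {γ} {b} C → muSep G {γ} {a} C) ∧
  (∀ (γ δ : V) (C : Set V), a ∉ C → b ∈ C →
    muSep G {γ} {δ} C → muSep G {γ} {b} C ∨ muSep G {a} {δ} C) ∧
  (∀ (γ : V) (C : Set V), a ∉ C → muSep G {b} {γ} C → muSep G {b} {γ} (C ∪ {a}))

/-- The graph `N(I(G))`: directed edge `a → b` present iff `a` is a potential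
parent of `b` in `I(G)`, bidirected edge `a ↔ b` present iff `a` and `b` are
potential siblings in `I(G)` (potential siblinghood is symmetric). -/
def NGraph (G : DMG V) : DMG V where
  dir a b := G.PotPar a b
  bi a b := G.PotSib a b ∨ G.PotSib b a
  bi_symm _ _ h := h.symm

/-- A path is m-connecting given `C` if it is a path (no repeated nodes), no
noncollider on it is in `C` and every collider on it is in `An(C)`. -/
def Walk.MConn {G : DMG V} (C : Set V) : ∀ {a b : V}, Walk G a b → Prop
  | _, _, .nil _ => True
  | _, _, .cons s w =>
      (Walk.cons s w).nodes.Nodup ∧ Walk.openFrom C (G.anSet C) s.headEnd w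

/-- `A` and `B` are m-separated by `C`: there is no m-connecting path between
a node of `A` and a node of `B` given `C`. -/
def mSep (G : DMG V) (A B C : Set V) : Prop :=
  ∀ ⦃a b : V⦄, a ∈ A → b ∈ B →
    (∀ w : Walk G a b, ¬ w.MConn C) ∧ (∀ w : Walk G b a, ¬ w.MConn C)

/-- Auxiliary directed-edge relation of the `B`-history version of `G`. -/
def histDir (G : DMG V) (B : Set V) : (V ⊕ {x : V // x ∈ B}) → (V ⊕ {x : V // x ∈ B}) → Prop
  | .inl u, .inl v => G.dir u v
  | .inl u, .inr v => G.dir u v.1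
  | _, _ => False

/-- Auxiliary bidirected-edge relation of the `B`-history version of `G`. -/
def histBi (G : DMG V) (B : Set V) : (V ⊕ {x : V // x ∈ B}) → (V ⊕ {x : V // x ∈ B}) → Prop
  | .inl u, .inl v => G.bi u v
  | .inl u, .inr v => G.bi u v.1
  | .inr u, .inl v => G.bi u.1 v
  | .inr _, .inr _ => False

/-- The `B`-history version `G(B)` of `G`: node set `V ⊔ Bᵖ`, whose subgraph
on `V` is `G`, with additionally `α ↔ βᵖ` whenever `α ↔ β` in `G` and
`α → βᵖ` whenever `α → β` in `G` (for `α ∈ V`, `β ∈ B`). -/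
def hist (G : DMG V) (B : Set V) : DMG (V ⊕ {x : V // x ∈ B}) where
  dir := G.histDir B
  bi := G.histBi B
  bi_symm x y h := by
    cases x <;> cases y <;>
      simp only [histBi] at h ⊢ <;>
      first
        | exact G.bi_symm _ _ h
        | exact h

end DMG

/-!
Expansion: replacing every edge of a walk in `m(G, O)` by a collider-free walk through `V ∖ O`
with the same endpoint marks preserves the status of each old node, the new nodes are
noncolliders outside `C ⊆ O`, and ancestors in `m(G, O)` are ancestors in `G`.

Contraction: a μ-connecting walk in `G` is first rerouted so that all its colliders lie in `C`,
by the detour `γ → ⋯ → c ← ⋯ ← γ` from each collider `γ ∈ An(C) ∖ C` to the first node `c ∈ C`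
of a directed path. Its stretches between consecutive nodes of `O` are then collider-free walks
through `V ∖ O`, i.e. edges of `m(G, O)`, and the colliders of the contracted walk lie in `C`.
-/

namespace DMG

variable {V : Type u} {G : DMG V}

namespace Step

def symm : ∀ {a b : V}, Step G a b → Step G b a
  | _, _, .dirF h => .dirB h
  | _, _, .dirB h => .dirF h
  | _, _, .bid h => .bid (G.bi_symm _ _ h)

@[simp] lemma headStart_symm : ∀ {a b : V} (s : Step G a b), s.symm.headStart = s.headEnd
  | _, _, .dirF _ | _, _, .dirB _ | _, _, .bid _ => rfl

@[simp] lemma headEnd_symm : ∀ {a b : V} (s : Step G a b), s.symm.headEnd = s.headStart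
  | _, _, .dirF _ | _, _, .dirB _ | _, _, .bid _ => rfl

end Step

namespace Walk

variable {a b c d : V}

def append : ∀ {a b c : V}, Walk G a b → Walk G b c → Walk G a c
  | _, _, _, .nil _, w₂ => w₂
  | _, _, _, .cons s w, w₂ => .cons s (w.append w₂)

@[simp] lemma nil_append (w : Walk G a b) : (nil a).append w = w := rfl

@[simp] lemma cons_append (s : Step G a b) (w₁ : Walk G b c) (w₂ : Walk G c d) :
    (cons s w₁).append w₂ = cons s (w₁.append w₂) := rfl

lemma append_assoc : ∀ {a b c d : V} (w₁ : Walk G a b) (w₂ : Walk G b c) (w₃ : Walk G c d),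
    (w₁.append w₂).append w₃ = w₁.append (w₂.append w₃)
  | _, _, _, _, .nil _, _, _ => rfl
  | _, _, _, _, .cons s w, w₂, w₃ => congrArg (cons s) (append_assoc w w₂ w₃)

lemma cons_nontrivial (s : Step G a b) (w : Walk G b c) : (cons s w).Nontrivial := trivial

def reverse : ∀ {a b : V}, Walk G a b → Walk G b a
  | _, _, .nil a => .nil a
  | _, _, .cons s w => w.reverse.append (.cons s.symm (.nil _))

/-- The mark at the final node of the last edge; `h`, the mark at the start of an edge
entering the walk, is returned for a trivial walk, matching the convention of `openFrom`. -/
def exitHead : ∀ {a b : V}, Bool → Walk G a b → Bool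
  | _, _, h, .nil _ => h
  | _, _, _, .cons s w => exitHead s.headEnd w

lemma exitHead_append : ∀ {a b c : V} (h : Bool) (w₁ : Walk G a b) (w₂ : Walk G b c),
    (w₁.append w₂).exitHead h = w₂.exitHead (w₁.exitHead h)
  | _, _, _, _, .nil _, _ => rfl
  | _, _, _, _, .cons s w, w₂ => exitHead_append s.headEnd w w₂

lemma lastHead_eq_exitHead : ∀ {a b : V} {w : Walk G a b}, w.Nontrivial →
    ∀ h : Bool, w.lastHead = w.exitHead h
  | _, _, .cons _ (.nil _), _, _ => rfl
  | _, _, .cons s (.cons t w), _, _ => lastHead_eq_exitHead (cons_nontrivial t w) s.headEnd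

lemma nontrivial_append_left {w₁ : Walk G a b} (w₂ : Walk G b c) (h : w₁.Nontrivial) :
    (w₁.append w₂).Nontrivial := by
  cases w₁ with
  | nil => exact h.elim
  | cons => trivial

lemma nontrivial_append_right (w₁ : Walk G a b) {w₂ : Walk G b c} (h : w₂.Nontrivial) :
    (w₁.append w₂).Nontrivial := by
  cases w₁ with
  | nil => exact h
  | cons => trivial

lemma firstHead_append {w₁ : Walk G a b} (w₂ : Walk G b c) (h : w₁.Nontrivial) :
    (w₁.append w₂).firstHead = w₁.firstHead := by
  cases w₁ with
  | nil => exact h.elim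
  | cons => rfl

lemma nodes_ne_nil : ∀ {a b : V} (w : Walk G a b), w.nodes ≠ []
  | _, _, .nil _ | _, _, .cons _ _ => List.cons_ne_nil _ _

lemma nodes_append : ∀ {a b c : V} (w₁ : Walk G a b) (w₂ : Walk G b c),
    (w₁.append w₂).nodes = w₁.nodes ++ w₂.nodes.tail
  | _, _, _, .nil _, w₂ => by cases w₂ <;> rfl
  | _, _, _, .cons _ w, w₂ => congrArg (_ :: ·) (nodes_append w w₂)

lemma nodes_reverse : ∀ {a b : V} (w : Walk G a b), w.reverse.nodes = w.nodes.reverse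
  | _, _, .nil _ => rfl
  | _, _, .cons _ w => by simp [reverse, nodes, nodes_append, nodes_reverse w]

lemma interior_reverse (w : Walk G a b) : w.reverse.interior = w.interior.reverse := by
  simp only [interior, nodes_reverse, List.dropLast_reverse, List.drop_one, List.tail_reverse,
    List.reverse_inj]
  rcases w.nodes with _ | ⟨_, _ | ⟨_, _⟩⟩ <;> rfl

lemma interior_cons (s : Step G a b) (w : Walk G b c) :
    (cons s w).interior = w.nodes.dropLast := by
  simp [interior, nodes, List.dropLast_cons_of_ne_nil (nodes_ne_nil w)]

lemma nodes_tail_append (w₁ : Walk G a b) (w₂ : Walk G b c) :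
    (w₁.append w₂).nodes.tail = w₁.nodes.tail ++ w₂.nodes.tail := by
  rw [nodes_append, List.tail_append_of_ne_nil (nodes_ne_nil w₁)]

lemma interior_append_cons_nil (w : Walk G a b) (s : Step G b c) :
    (w.append (cons s (nil c))).interior = w.nodes.tail := by
  simp [interior, nodes_append, nodes]

lemma end_mem_nodes : ∀ {a b : V} (w : Walk G a b), b ∈ w.nodes
  | _, _, .nil _ => List.mem_singleton_self _
  | _, _, .cons _ w => List.mem_cons_of_mem _ (end_mem_nodes w)

lemma end_mem_nodes_tail {w : Walk G a b} (hw : w.Nontrivial) : b ∈ w.nodes.tail := by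
  cases w with
  | nil => exact hw.elim
  | cons _ w => exact end_mem_nodes w

lemma openFrom_append (C S : Set V) :
    ∀ {a b c : V} (h : Bool) (w₁ : Walk G a b) (w₂ : Walk G b c),
      openFrom C S h (w₁.append w₂) ↔ openFrom C S h w₁ ∧ openFrom C S (w₁.exitHead h) w₂
  | _, _, _, _, .nil _, _ => by simp [openFrom, exitHead]
  | _, _, _, _, .cons s w, w₂ => by
      simp only [cons_append, openFrom, exitHead, openFrom_append C S s.headEnd w w₂, and_assoc]

lemma collInFrom_append (S : Set V) :
    ∀ {a b c : V} (h : Bool) (w₁ : Walk G a b) (w₂ : Walk G b c),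
      collInFrom S h (w₁.append w₂) ↔ collInFrom S h w₁ ∧ collInFrom S (w₁.exitHead h) w₂
  | _, _, _, _, .nil _, _ => by simp [collInFrom, exitHead]
  | _, _, _, _, .cons s w, w₂ => by
      simp only [cons_append, collInFrom, exitHead, collInFrom_append S s.headEnd w w₂, and_assoc]

lemma openFrom_mono {C S S' : Set V} (hS : S ⊆ S') :
    ∀ {a b : V} {h : Bool} {w : Walk G a b}, openFrom C S h w → openFrom C S' h w
  | _, _, _, .nil _, _ => trivial
  | _, _, h, .cons s w, hw => by
      simp only [openFrom] at hw ⊢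
      refine ⟨?_, openFrom_mono hS hw.2⟩
      have ha := hw.1
      split_ifs at ha ⊢
      exacts [hS ha, ha]

lemma collInFrom_iff {S : Set V} {h : Bool} {w : Walk G a b} :
    collInFrom S h w ↔ ((h && w.firstHead) = true → a ∈ S) ∧ w.CollidersIn S := by
  cases w with
  | nil => simp [collInFrom, CollidersIn, firstHead]
  | cons => rfl

lemma collidersIn_append {S : Set V} {w₁ : Walk G a b} (w₂ : Walk G b c) (hw : w₁.Nontrivial) :
    (w₁.append w₂).CollidersIn S ↔ w₁.CollidersIn S ∧ collInFrom S w₁.lastHead w₂ := by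
  cases w₁ with
  | nil => exact hw.elim
  | cons s w =>
      rw [lastHead_eq_exitHead hw false]
      exact collInFrom_append S s.headEnd w w₂

lemma NoColliders.snoc {w : Walk G a b} (hw : w.NoColliders) (s : Step G b c)
    (hs : w.Nontrivial → ¬(w.lastHead && s.headStart) = true) :
    (w.append (cons s (nil c))).NoColliders := by
  cases w with
  | nil => trivial
  | cons t w =>
      have hs := hs (cons_nontrivial t w)
      exact (collidersIn_append _ (cons_nontrivial t w)).2
        ⟨hw, collInFrom_iff.2 ⟨fun h => (hs h).elim, trivial⟩⟩

lemma nontrivial_reverse {w : Walk G a b} (hw : w.Nontrivial) : w.reverse.Nontrivial := by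
  cases w with
  | nil => exact hw.elim
  | cons => exact nontrivial_append_right _ (cons_nontrivial _ _)

lemma lastHead_reverse (w : Walk G a b) : w.reverse.lastHead = w.firstHead := by
  cases w with
  | nil => rfl
  | cons s w =>
      rw [reverse, lastHead_eq_exitHead (nontrivial_append_right _ (cons_nontrivial _ _)) false,
        exitHead_append]
      exact s.headEnd_symm

lemma firstHead_reverse : ∀ {a b : V} (w : Walk G a b), w.reverse.firstHead = w.lastHead
  | _, _, .nil _ => rfl
  | _, _, .cons s (.nil _) => s.headStart_symm
  | _, _, .cons _ (.cons t w) => by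
      rw [reverse, firstHead_append _ (nontrivial_reverse (cons_nontrivial t w)), firstHead_reverse]
      rfl

lemma noColliders_reverse : ∀ {a b : V} {w : Walk G a b}, w.NoColliders → w.reverse.NoColliders
  | _, _, .nil _, _ => trivial
  | _, _, .cons s w, hw => by
      obtain ⟨hjunction, hw⟩ := collInFrom_iff.1 hw
      refine (noColliders_reverse hw).snoc s.symm fun _ => ?_
      rw [lastHead_reverse, Step.headStart_symm, Bool.and_comm]
      exact hjunction

lemma muConn_iff {C : Set V} : ∀ {a b : V} (w : Walk G a b),
    w.MuConn C ↔ w.Nontrivial ∧ openFrom C (G.anSet C) false w ∧ w.exitHead false = true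
  | _, _, .nil _ => by simp [MuConn, Nontrivial]
  | a, _, .cons s w => by
      rw [MuConn, lastHead_eq_exitHead (cons_nontrivial s w) false]
      simp [Nontrivial, openFrom, and_assoc]

lemma openFrom_of_collInFrom_empty {C S : Set V} :
    ∀ {a b : V} {h : Bool} {w : Walk G a b}, collInFrom ∅ h w →
      (∀ z ∈ w.nodes.dropLast, z ∉ C) → openFrom C S h w
  | _, _, _, .nil _, _, _ => trivial
  | a, _, h, .cons s w, hw, hC => by
      obtain ⟨hcoll, hw⟩ := hw
      rw [nodes, List.dropLast_cons_of_ne_nil (nodes_ne_nil w)] at hC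
      refine ⟨?_, openFrom_of_collInFrom_empty hw fun z hz => hC z (List.mem_cons_of_mem a hz)⟩
      rw [if_neg fun hh => hcoll hh]
      exact hC a List.mem_cons_self

lemma openFrom_start {C S : Set V} {h : Bool} {w : Walk G a b} (hw : w.Nontrivial)
    (ho : openFrom C S h w) : if (h && w.firstHead) = true then a ∈ S else a ∉ C := by
  cases w with
  | nil => exact hw.elim
  | cons => exact ho.1

lemma openFrom_of_noColliders {C S : Set V} {h : Bool} {w : Walk G a b} (hnc : w.NoColliders)
    (hC : ∀ z ∈ w.interior, z ∉ C) (ha : if (h && w.firstHead) = true then a ∈ S else a ∉ C) :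
    openFrom C S h w := by
  cases w with
  | nil => trivial
  | cons s w =>
      rw [interior_cons] at hC
      exact ⟨ha, openFrom_of_collInFrom_empty hnc hC⟩

lemma NoColliders.snoc_of_openFrom {C S : Set V} {h : Bool} {w : Walk G a b}
    (hw : w.NoColliders) (hS : ∀ v ∈ w.nodes.tail, v ∉ S) (s : Step G b c)
    (hb : if (w.exitHead h && s.headStart) = true then b ∈ S else b ∉ C) :
    (w.append (cons s (nil c))).NoColliders :=
  hw.snoc s fun hw_nt hcoll => by
    rw [lastHead_eq_exitHead hw_nt h] at hcoll
    rw [if_pos hcoll] at hb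
    exact hS b (end_mem_nodes_tail hw_nt) hb

lemma anc_and_exitHead_of_collInFrom_empty :
    ∀ {a b : V} {w : Walk G a b}, collInFrom ∅ true w → G.anc a b ∧ w.exitHead true = true
  | _, _, .nil _, _ => ⟨.refl, rfl⟩
  | _, _, .cons (.dirF e) _, hw =>
      let ⟨hanc, hexit⟩ := anc_and_exitHead_of_collInFrom_empty hw.2
      ⟨Relation.ReflTransGen.head e hanc, hexit⟩
  | _, _, .cons (.dirB _) _, hw | _, _, .cons (.bid _) _, hw => (hw.1 rfl).elim

end Walk

open Walk

lemma subset_anSet (C : Set V) : C ⊆ G.anSet C := fun c hc => ⟨c, hc, .refl⟩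

namespace ConnThrough

variable {M : Set V} {x y : V}

lemma symm {h₁ h₂ : Bool} (h : ConnThrough G M x y h₁ h₂) : ConnThrough G M y x h₂ h₁ := by
  obtain ⟨w, hnt, hnc, hM, rfl, rfl⟩ := h
  refine ⟨w.reverse, nontrivial_reverse hnt, noColliders_reverse hnc, fun z hz => hM z ?_,
    firstHead_reverse w, lastHead_reverse w⟩
  rwa [interior_reverse, List.mem_reverse] at hz

lemma anc_and_head_of_tail {he : Bool} (h : ConnThrough G M x y false he) :
    G.anc x y ∧ he = true := by
  obtain ⟨w, hnt, hnc, -, hf, rfl⟩ := h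
  cases w with
  | nil => exact hnt.elim
  | cons s w =>
      cases s with
      | dirF e =>
          obtain ⟨hanc, hexit⟩ := anc_and_exitHead_of_collInFrom_empty hnc
          exact ⟨Relation.ReflTransGen.head e hanc,
            (lastHead_eq_exitHead (cons_nontrivial _ w) false).trans hexit⟩
      | dirB _ | bid _ => cases hf

end ConnThrough

lemma exists_detour {C : Set V} {γ c : V} (hγ : γ ∉ C) (hγc : G.anc γ c) (hc : c ∈ C) :
    ∃ d : Walk G γ γ, d.Nontrivial ∧ (∀ h, openFrom C C h d) ∧ ∀ h, d.exitHead h = false := by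
  revert hγ
  induction hγc using Relation.ReflTransGen.head_induction_on with
  | refl => exact fun hγ => absurd hc hγ
  | @head γ u e _ ih =>
      intro hγ
      by_cases hu : u ∈ C
      · refine ⟨.cons (.dirF e) (.cons (.dirB e) (.nil γ)), trivial, fun h => ?_, fun _ => rfl⟩
        simp [openFrom, Step.headStart, Step.headEnd, hγ, hu]
      · obtain ⟨d, -, hd, hdexit⟩ := ih hu
        refine ⟨.cons (.dirF e) (d.append (.cons (.dirB e) (.nil γ))), trivial, fun h => ?_,
          fun _ => ?_⟩
        · simp only [openFrom, Step.headStart, Step.headEnd, openFrom_append, hdexit]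
          simp [hγ, hu, hd]
        · simp only [exitHead, exitHead_append, Step.headEnd]

lemma exists_reroute {C : Set V} :
    ∀ {a b : V} {h : Bool} (w : Walk G a b), openFrom C (G.anSet C) h w →
      ∃ w' : Walk G a b, (w.Nontrivial → w'.Nontrivial) ∧ openFrom C C h w' ∧
        w'.exitHead h = w.exitHead h
  | _, _, _, .nil _, _ => ⟨.nil _, id, trivial, rfl⟩
  | a, _, h, .cons s w, hw => by
      obtain ⟨ha, hw⟩ := hw
      obtain ⟨w', -, hw', hexit⟩ := exists_reroute w hw
      by_cases hdetour : (h && s.headStart) = true ∧ a ∉ C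
      · rw [if_pos hdetour.1] at ha
        obtain ⟨c, hc, hac⟩ := ha
        obtain ⟨d, hd, hdopen, hdexit⟩ := exists_detour hdetour.2 hac hc
        refine ⟨d.append (.cons s w'), fun _ => nontrivial_append_left _ hd, ?_, ?_⟩
        · rw [openFrom_append, hdexit]
          exact ⟨hdopen h, by rw [if_neg (by simp)]; exact hdetour.2, hw'⟩
        · rw [exitHead_append, hdexit]
          exact hexit
      · refine ⟨.cons s w', fun _ => trivial, ⟨?_, hw'⟩, hexit⟩
        split_ifs at ha ⊢ with hcoll
        · by_contra haC
          exact hdetour ⟨hcoll, haC⟩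
        · exact ha

section latentProj

variable {O : Set V}

lemma connThrough_of_step_latentProj {x y : {v : V // v ∈ O}} :
    ∀ P : Step (G.latentProj O) x y, ConnThrough G Oᶜ x.1 y.1 P.headStart P.headEnd
  | .dirF e => e
  | .dirB e => e.symm
  | .bid (.inl e) => e
  | .bid (.inr e) => e.symm

lemma exists_step_latentProj {x y : V} (hx : x ∈ O) (hy : y ∈ O) {h₁ h₂ : Bool}
    (h : ConnThrough G Oᶜ x y h₁ h₂) :
    ∃ P : Step (G.latentProj O) ⟨x, hx⟩ ⟨y, hy⟩, P.headStart = h₁ ∧ P.headEnd = h₂ :=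
  match h₁, h₂, h with
  | false, false, h => absurd h.anc_and_head_of_tail.2 Bool.false_ne_true
  | false, true, h => ⟨.dirF h, rfl, rfl⟩
  | true, false, h => ⟨.dirB h.symm, rfl, rfl⟩
  | true, true, h => ⟨.bid (.inl h), rfl, rfl⟩

lemma anc_of_anc_latentProj {x y : {v : V // v ∈ O}} (h : (G.latentProj O).anc x y) :
    G.anc x.1 y.1 := by
  induction h with
  | refl => exact .refl
  | tail _ e ih => exact ih.trans (ConnThrough.anc_and_head_of_tail e).1

lemma image_anSet_latentProj_subset (C : Set V) :
    Subtype.val '' (G.latentProj O).anSet (Subtype.val ⁻¹' C) ⊆ G.anSet C := by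
  rintro _ ⟨x, ⟨c, hc, hxc⟩, rfl⟩
  exact ⟨c.1, hc, anc_of_anc_latentProj hxc⟩

lemma exists_expand_latentProj {C : Set V} (hC : C ⊆ O) {S : Set {v : V // v ∈ O}} :
    ∀ {x y : {v : V // v ∈ O}} {h : Bool} (W : Walk (G.latentProj O) x y),
      openFrom (Subtype.val ⁻¹' C) S h W →
      ∃ w : Walk G x.1 y.1, (W.Nontrivial → w.Nontrivial) ∧
        openFrom C (Subtype.val '' S) h w ∧ w.exitHead h = W.exitHead h
  | _, _, _, .nil _, _ => ⟨.nil _, id, trivial, rfl⟩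
  | x, _, h, .cons P W, hW => by
      obtain ⟨hx, hW⟩ := hW
      obtain ⟨w, -, hw, hexit⟩ := exists_expand_latentProj hC W hW
      obtain ⟨seg, hseg, hnc, hM, hfirst, hlast⟩ := connThrough_of_step_latentProj P
      have hseg_exit : seg.exitHead h = P.headEnd :=
        (lastHead_eq_exitHead hseg h).symm.trans hlast
      refine ⟨seg.append w, fun _ => nontrivial_append_left _ hseg, ?_, ?_⟩
      · rw [openFrom_append, hseg_exit]
        refine ⟨openFrom_of_noColliders hnc (fun z hz hzC => hM z hz (hC hzC)) ?_, hw⟩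
        rw [hfirst]
        split_ifs at hx ⊢
        exacts [⟨x, hx, rfl⟩, hx]
      · rw [exitHead_append, hseg_exit, hexit]
        rfl

/-- `p` is the part of `p.append w` read since the last node of `O`: it becomes one edge of
the latent projection as soon as the walk returns to `O`. -/
lemma exists_contract_latentProj {C S : Set V} (hS : S ⊆ O) :
    ∀ {z y : V} (w : Walk G z y) (hy : y ∈ O) {x : V} (hx : x ∈ O) {h : Bool} (p : Walk G x z),
      p.NoColliders → (∀ u ∈ p.nodes.tail, u ∉ O) → openFrom C S h (p.append w) →
      ∃ W : Walk (G.latentProj O) ⟨x, hx⟩ ⟨y, hy⟩, ((p.append w).Nontrivial → W.Nontrivial) ∧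
        openFrom (Subtype.val ⁻¹' C) (Subtype.val ⁻¹' S) h W ∧
        W.exitHead h = (p.append w).exitHead h
  | _, _, .nil _, hy, _, _, _, p, _, hO, _ => by
      cases p with
      | nil => exact ⟨.nil _, id, trivial, rfl⟩
      | cons s p => exact absurd hy (hO _ (end_mem_nodes_tail (cons_nontrivial s p)))
  | z, _, @Walk.cons _ _ _ u _ s w, hy, x, hx, h, p, hnc, hO, hopen => by
      obtain ⟨hp, hz, hw⟩ := (openFrom_append C S h p (cons s w)).1 hopen
      set p' := p.append (cons s (nil u))
      have hsplit : p.append (cons s w) = p'.append w := (append_assoc p (cons s (nil u)) w).symm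
      have hp' : openFrom C S h p' := (openFrom_append C S h p _).2 ⟨hp, hz, trivial⟩
      have hp'_nt : p'.Nontrivial := nontrivial_append_right p (cons_nontrivial s (nil u))
      have hp'_exit : p'.exitHead h = s.headEnd := by rw [exitHead_append]; rfl
      have hp'nc : p'.NoColliders := hnc.snoc_of_openFrom (fun v hv hvS => hO v hv (hS hvS)) s hz
      rw [hsplit] at hopen ⊢
      by_cases hu : u ∈ O
      · obtain ⟨P, hPs, hPe⟩ := exists_step_latentProj hx hu ⟨p', hp'_nt, hp'nc,
          fun v hv => hO v (by rwa [interior_append_cons_nil] at hv), rfl, rfl⟩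
        rw [lastHead_eq_exitHead hp'_nt h, hp'_exit] at hPe
        obtain ⟨W, -, hW, hWexit⟩ := exists_contract_latentProj hS w hy hu (h := s.headEnd)
          (nil u) trivial (by simp [nodes]) hw
        refine ⟨cons P W, fun _ => trivial, ⟨?_, ?_⟩, ?_⟩
        · rw [hPs]
          exact openFrom_start hp'_nt hp'
        · rwa [hPe]
        · rw [exitHead_append, hp'_exit]
          show W.exitHead P.headEnd = _
          rw [hPe]
          exact hWexit
      · refine exists_contract_latentProj hS w hy hx p' hp'nc (fun v hv => ?_) hopen
        rw [nodes_tail_append] at hv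
        exact (List.mem_append.1 hv).elim (hO v) fun hv => List.mem_singleton.1 hv ▸ hu

lemma Walk.MuConn.expand_latentProj {C : Set V} (hC : C ⊆ O) {x y : {v : V // v ∈ O}}
    {W : Walk (G.latentProj O) x y} (hW : W.MuConn (Subtype.val ⁻¹' C)) :
    ∃ w : Walk G x.1 y.1, w.MuConn C := by
  obtain ⟨hnt, hopen, hexit⟩ := (muConn_iff W).1 hW
  obtain ⟨w, hw, hwopen, hwexit⟩ := exists_expand_latentProj hC W hopen
  exact ⟨w, (muConn_iff w).2
    ⟨hw hnt, openFrom_mono (image_anSet_latentProj_subset C) hwopen, hwexit.trans hexit⟩⟩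

lemma Walk.MuConn.contract_latentProj {C : Set V} (hC : C ⊆ O) {a b : V} (ha : a ∈ O) (hb : b ∈ O)
    {w : Walk G a b} (hw : w.MuConn C) :
    ∃ W : Walk (G.latentProj O) ⟨a, ha⟩ ⟨b, hb⟩, W.MuConn (Subtype.val ⁻¹' C) := by
  obtain ⟨hnt, hopen, hexit⟩ := (muConn_iff w).1 hw
  obtain ⟨w', hw', hopen', hexit'⟩ := exists_reroute w hopen
  obtain ⟨W, hW, hWopen, hWexit⟩ :=
    exists_contract_latentProj hC w' hb ha (nil a) trivial (by simp [nodes]) hopen'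
  exact ⟨W, (muConn_iff W).2
    ⟨hW (hw' hnt), openFrom_mono (subset_anSet _) hWopen, hWexit.trans (hexit'.trans hexit)⟩⟩

end latentProj

end DMG

theorem stmt6_general {V : Type u} (G : DMG V) (O : Set V) (A B C : Set V)
    (hA : A ⊆ O) (hB : B ⊆ O) (hC : C ⊆ O) :
    DMG.muSep G A B C ↔
      DMG.muSep (G.latentProj O)
        (Subtype.val ⁻¹' A) (Subtype.val ⁻¹' B) (Subtype.val ⁻¹' C) := by
  constructor
  · intro hsep x y hx hy W hW
    obtain ⟨w, hw⟩ := hW.expand_latentProj hC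
    exact hsep hx hy w hw
  · intro hsep a b ha hb w hw
    obtain ⟨W, hW⟩ := hw.contract_latentProj hC (hA ha) (hB hb)
    exact hsep (a := ⟨a, hA ha⟩) ha hb W hW

/-- Theorem 1: for `A, B, C ⊆ O`, `B` is μ-separated from
`A` given `C` in `G` iff `B` is μ-separated from `A` given `C` in the latent
projection `m(G, O)`. -/
theorem stmt6 {V : Type u} [Fintype V] (G : DMG V) (O : Set V) (A B C : Set V)
    (hA : A ⊆ O) (hB : B ⊆ O) (hC : C ⊆ O) :
    DMG.muSep G A B C ↔
      DMG.muSep (G.latentProj O)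
        (Subtype.val ⁻¹' A) (Subtype.val ⁻¹' B) (Subtype.val ⁻¹' C) :=
  stmt6_general G O A B C hA hB hC
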